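/- arXiv:1604.06600 — 3 statements merged into one kernel-verified Lean document; each statement's English description precedes it below -/
import Mathlib

section
/- For a uniform cyclic binary CA of length n ≥ 5 with a single local rule f : {0,1}^3 → {0,1}, if the global map conserves the number of 1s in every configuration, then f satisfies: (f(0,0,0) = f(1,0,0) and f(0,0,1) = f(1,0,1)) or (f(0,0,0) = f(0,0,1) and f(1,0,0) = f(1,0,1)). -/
/-- Global map of a non-uniform cyclic CA of length `n`:
cell `i` updates via its local rule applied to `(x (i-1), x i, x (i+1))`, indices mod `n`. -/
def caStep (n : ℕ) [NeZero n] (f : Fin n → Bool → Bool → Bool → Bool)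
    (x : Fin n → Bool) : Fin n → Bool :=
  fun i => f i (x (i - 1)) (x i) (x (i + 1))

/-- Number of cells in state `true` (i.e. 1). -/
def onesCount (n : ℕ) (x : Fin n → Bool) : ℕ :=
  (Finset.univ.filter fun i => x i = true).card

/-- The CA conserves the number of 1s in every configuration. -/
def numberConserving (n : ℕ) [NeZero n] (f : Fin n → Bool → Bool → Bool → Bool) : Prop :=
  ∀ x : Fin n → Bool, onesCount n (caStep n f x) = onesCount n x

/-- The elementary CA rule with Wolfram number `R`. -/
def wolfram (R : ℕ) (a b c : Bool) : Bool :=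
  R.testBit (4 * a.toNat + 2 * b.toNat + c.toNat)

/-!
The all-zero configuration forces `f(0,0,0) = 0`. A finite pattern of 1s padded by zeros then
fits on the cycle without touching itself across the seam, so conservation on it becomes an
identity between values of `f`: one isolated 1 gives `f(001) + f(010) + f(100) = 1`, and two 1s
at distance two (five cells, hence `n ≥ 5`) give `f(001) + f(010) + f(101) + f(010) + f(100) = 2`.
Subtracting, `f(101) = f(001) + f(100)` with at most one summand equal to 1, which is the claim.
-/

open Finset

section Pattern

variable {R : Type*} [AddGroupWithOne R] {p : ℕ} [CharP R p]

theorem CharP.intCast_eq_intCast_iff_of_abs_sub_lt {a b : ℤ} (h : |a - b| < p) :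
    (a : R) = b ↔ a = b := by
  rw [CharP.intCast_eq_intCast R p, Int.modEq_comm, Int.modEq_iff_dvd]
  exact ⟨fun hd => sub_eq_zero.1 (Int.eq_zero_of_abs_lt_dvd hd h), fun hab => by simp [hab]⟩

variable [DecidableEq R]

def patternConfig (P : Finset ℤ) (i : R) : Bool :=
  decide (i ∈ P.image (Int.cast : ℤ → R))

theorem patternConfig_intCast {P : Finset ℤ} {a b k : ℤ} (hP : P ⊆ Icc (a + 1) (b - 1))
    (hab : b - a < p) (hk : k ∈ Icc (a - 1) (b + 1)) :
    patternConfig P (k : R) = decide (k ∈ P) := by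
  refine decide_eq_decide.2 ⟨fun hkP => ?_, fun hkP => mem_image_of_mem _ hkP⟩
  obtain ⟨l, hl, hlk⟩ := mem_image.1 hkP
  have := mem_Icc.1 (hP hl)
  have := mem_Icc.1 hk
  have hlk_abs : |l - k| < p := abs_sub_lt_iff.2 ⟨by omega, by omega⟩
  rwa [← (CharP.intCast_eq_intCast_iff_of_abs_sub_lt hlk_abs).1 hlk]

/-- Nothing wraps around: `Int.cast` is injective on `[a, b]`, and outside its image every
neighbourhood is `(0, 0, 0)`. -/
theorem sum_windows_patternConfig [Fintype R] (g : Bool → Bool → Bool → ℕ)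
    (hg : g false false false = 0) {P : Finset ℤ} {a b : ℤ} (hP : P ⊆ Icc (a + 1) (b - 1))
    (hab : b - a < p) :
    ∑ i : R, g (patternConfig P (i - 1)) (patternConfig P i) (patternConfig P (i + 1)) =
      ∑ k ∈ Icc a b, g (decide (k - 1 ∈ P)) (decide (k ∈ P)) (decide (k + 1 ∈ P)) := by
  set x : R → Bool := patternConfig P
  have hinj : Set.InjOn (Int.cast : ℤ → R) (Icc a b) := fun k hk l hl hkl => by
    have := mem_Icc.1 hk
    have := mem_Icc.1 hl
    have hkl_abs : |k - l| < p := abs_sub_lt_iff.2 ⟨by omega, by omega⟩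
    exact (CharP.intCast_eq_intCast_iff_of_abs_sub_lt hkl_abs).1 hkl
  have hwindow : ∀ k ∈ Icc a b,
      g (decide (k - 1 ∈ P)) (decide (k ∈ P)) (decide (k + 1 ∈ P)) =
        g (x ((k : R) - 1)) (x k) (x ((k : R) + 1)) := fun k hk => by
    have := mem_Icc.1 hk
    have hnear : ∀ c : ℤ, |c| ≤ 1 → k + c ∈ Icc (a - 1) (b + 1) := fun c hc => by
      have := abs_le.1 hc
      exact mem_Icc.2 ⟨by omega, by omega⟩
    rw [← patternConfig_intCast (R := R) hP hab (by simpa using hnear (-1) (by norm_num)),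
      ← patternConfig_intCast (R := R) hP hab (by simpa using hnear 0 (by norm_num)),
      ← patternConfig_intCast (R := R) hP hab (hnear 1 (by norm_num))]
    push_cast
    rfl
  rw [sum_congr rfl hwindow, ← sum_image (f := fun i => g (x (i - 1)) (x i) (x (i + 1))) hinj]
  refine (sum_subset (subset_univ _) fun i _ hi => ?_).symm
  have hzero : ∀ c : ℤ, |c| ≤ 1 → x (i + c) = false := fun c hc => by
    refine Bool.eq_false_iff.2 fun h => ?_
    obtain ⟨l, hl, hli⟩ := mem_image.1 (of_decide_eq_true h)
    have := mem_Icc.1 (hP hl)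
    have := abs_le.1 hc
    exact hi (mem_image.2 ⟨l - c, mem_Icc.2 ⟨by omega, by omega⟩,
      by rw [Int.cast_sub, hli, add_sub_cancel_right]⟩)
  have hl := hzero (-1) (by norm_num)
  have hc := hzero 0 (by norm_num)
  have hr := hzero 1 (by norm_num)
  push_cast at hl hc hr
  rw [← sub_eq_add_neg] at hl
  rw [add_zero] at hc
  rw [hl, hc, hr, hg]

end Pattern

section CellularAutomaton

variable {n : ℕ}

theorem onesCount_eq_sum (x : Fin n → Bool) : onesCount n x = ∑ i, (x i).toNat := by
  rw [onesCount, card_filter]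
  exact sum_congr rfl fun i _ => by cases x i <;> rfl

variable [NeZero n] {f : Bool → Bool → Bool → Bool}

theorem numberConserving.rule_false_false_false (h : numberConserving n fun _ => f) :
    f false false false = false := by
  have h0 := h fun _ => false
  simp only [onesCount_eq_sum, caStep, Bool.toNat_false, sum_const_zero, sum_eq_zero_iff] at h0
  simpa using h0 0 (mem_univ 0)

open Fin.CommRing in
theorem numberConserving.sum_windows_eq_card (h : numberConserving n fun _ => f)
    {P : Finset ℤ} {a b : ℤ} (hP : P ⊆ Icc (a + 1) (b - 1)) (hab : b - a < n) :
    ∑ k ∈ Icc a b, (f (decide (k - 1 ∈ P)) (decide (k ∈ P)) (decide (k + 1 ∈ P))).toNat =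
      #P := by
  have hcons := h (patternConfig P)
  rw [onesCount_eq_sum, onesCount_eq_sum] at hcons
  rw [← sum_windows_patternConfig (R := Fin n) (fun a b c => (f a b c).toNat)
    (by simp [h.rule_false_false_false]) hP hab]
  refine hcons.trans ?_
  rw [sum_windows_patternConfig (R := Fin n) (fun _ b _ => b.toNat) rfl hP hab]
  have hPab : P ⊆ Icc a b := hP.trans (Icc_subset_Icc (by omega) (by omega))
  simp only [Bool.toNat, Bool.cond_decide, sum_boole, Nat.cast_id, filter_mem_eq_inter,
    inter_eq_right.2 hPab]

theorem numberConserving.isolated_one (h : numberConserving n fun _ => f) (hn : 3 ≤ n) :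
    (f false false true).toNat + (f false true false).toNat + (f true false false).toNat = 1 := by
  have := h.sum_windows_eq_card (P := {0}) (a := -1) (b := 1) (by decide) (by omega)
  rw [show Icc (-1 : ℤ) 1 = {-1, 0, 1} by decide] at this
  simpa [add_assoc] using this

theorem numberConserving.two_ones_at_distance_two (h : numberConserving n fun _ => f)
    (hn : 5 ≤ n) :
    (f false false true).toNat + (f false true false).toNat + (f true false true).toNat +
      (f false true false).toNat + (f true false false).toNat = 2 := by
  have := h.sum_windows_eq_card (P := {-1, 1}) (a := -2) (b := 2) (by decide) (by omega)
  rw [show Icc (-2 : ℤ) 2 = {-2, -1, 0, 1, 2} by decide] at this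
  simpa [add_assoc] using this

end CellularAutomaton

theorem stmt1 (n : ℕ) (hn : 5 ≤ n) [NeZero n] (f : Bool → Bool → Bool → Bool)
    (h : numberConserving n (fun _ => f)) :
    (f false false false = f true false false ∧ f false false true = f true false true) ∨
    (f false false false = f false false true ∧ f true false false = f true false true) := by
  have h1 := h.isolated_one (by omega)
  have h2 := h.two_ones_at_distance_two hn
  rw [h.rule_false_false_false]
  revert h1 h2
  cases f false false true <;> cases f false true false <;> cases f true false false <;>
    cases f true false true <;> decide
end

section
/- For a uniform cyclic binary CA of length n ≥ 5 with local rule f, if the global map conserves the number of 1s in every configuration, then f satisfies: (f(0,1,0) = f(1,1,0) and f(0,1,1) = f(1,1,1)) or (f(0,1,0) = f(0,1,1) and f(1,1,0) = f(1,1,1)). -/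
open Finset Function

lemma onesCount_eq_sum_toNat {n : ℕ} (x : Fin n → Bool) :
    (onesCount n x : ℤ) = ∑ i, ((x i).toNat : ℤ) := by
  rw [onesCount, card_filter]
  push_cast
  exact sum_congr rfl fun i _ => by cases x i <;> rfl

open Fin.NatCast in
lemma Fin.natCast_ne_zero_of_lt {n k : ℕ} [NeZero n] (hk : 0 < k) (hkn : k < n) :
    (k : Fin n) ≠ 0 := by
  rw [Ne, Fin.natCast_eq_zero]
  exact Nat.not_dvd_of_pos_of_lt hk hkn

open Fin.CommRing in
lemma Fin.sum_window {n : ℕ} [NeZero n] (hn : 3 ≤ n) (g : Fin n → ℤ) (i : Fin n) :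
    ∑ j ∈ {i - 1, i, i + 1}, g j = g (i - 1) + g i + g (i + 1) := by
  have h1 : (1 : Fin n) ≠ 0 := by exact_mod_cast Fin.natCast_ne_zero_of_lt Nat.one_pos (by omega)
  have h2 : (2 : Fin n) ≠ 0 := by exact_mod_cast Fin.natCast_ne_zero_of_lt Nat.two_pos (by omega)
  have hl : i - 1 ∉ ({i, i + 1} : Finset (Fin n)) := by
    simp only [mem_insert, mem_singleton, not_or]
    exact ⟨fun h => h1 (by linear_combination -h), fun h => h2 (by linear_combination -h)⟩
  have hm : i ∉ ({i + 1} : Finset (Fin n)) := by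
    simp only [mem_singleton]
    exact fun h => h1 (by linear_combination -h)
  rw [sum_insert hl, sum_insert hm, sum_singleton, add_assoc]

lemma Bool.eq_and_eq_or_eq_and_eq_of_toNat_add_eq {a b c d : Bool}
    (h : b.toNat + c.toNat = a.toNat + d.toNat) : (a = c ∧ b = d) ∨ (a = b ∧ c = d) := by
  revert h
  cases a <;> cases b <;> cases c <;> cases d <;> decide

section

variable {n : ℕ} [NeZero n]

lemma caStep_update_of_notMem (f : Fin n → Bool → Bool → Bool → Bool) (x : Fin n → Bool)
    {i j : Fin n} (v : Bool) (hj : j ∉ ({i - 1, i, i + 1} : Finset (Fin n))) :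
    caStep n f (update x i v) j = caStep n f x j := by
  simp only [mem_insert, mem_singleton, not_or] at hj
  obtain ⟨hjl, hji, hjr⟩ := hj
  have hl : j - 1 ≠ i := fun h => hjr (by rw [← h, sub_add_cancel])
  have hr : j + 1 ≠ i := fun h => hjl (by rw [← h, add_sub_cancel_right])
  simp only [caStep, update_of_ne hl, update_of_ne hji, update_of_ne hr]

theorem numberConserving.sum_window_caStep_update_sub
    {f : Fin n → Bool → Bool → Bool → Bool} (h : numberConserving n f)
    (x : Fin n → Bool) (i : Fin n) (v : Bool) :
    ∑ j ∈ {i - 1, i, i + 1},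
      (((caStep n f (update x i v) j).toNat : ℤ) - (caStep n f x j).toNat) =
      v.toNat - (x i).toNat := by
  have hcons (z : Fin n → Bool) :
      ∑ j, ((caStep n f z j).toNat : ℤ) = ∑ j, ((z j).toNat : ℤ) := by
    rw [← onesCount_eq_sum_toNat, ← onesCount_eq_sum_toNat, h z]
  calc ∑ j ∈ {i - 1, i, i + 1},
        (((caStep n f (update x i v) j).toNat : ℤ) - (caStep n f x j).toNat)
      = ∑ j, (((caStep n f (update x i v) j).toNat : ℤ) - (caStep n f x j).toNat) :=
        sum_subset (subset_univ _) fun j _ hj => by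
          rw [caStep_update_of_notMem f x v hj, sub_self]
    _ = ∑ j, (((update x i v j).toNat : ℤ) - (x j).toNat) := by
        rw [sum_sub_distrib, sum_sub_distrib, hcons, hcons]
    _ = v.toNat - (x i).toNat := by
        rw [sum_eq_single i (fun j _ hj => by rw [update_of_ne hj, sub_self]) (by simp),
          update_self]

open Fin.CommRing in
theorem numberConserving.toNat_add_toNat_eq (hn : 5 ≤ n) {f : Bool → Bool → Bool → Bool}
    (h : numberConserving n (fun _ => f)) (a : Bool) :
    ((f a true true).toNat : ℤ) + (f true true false).toNat =
      (f a true false).toNat + (f false false false).toNat + 1 := by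
  have hk (k : ℕ) (hk0 : 0 < k) (hk5 : k < 5) : (k : Fin n) ≠ 0 :=
    Fin.natCast_ne_zero_of_lt hk0 (by omega)
  have h1 : (1 : Fin n) ≠ 0 := by exact_mod_cast hk 1 (by norm_num) (by norm_num)
  have h2 : (2 : Fin n) ≠ 0 := by exact_mod_cast hk 2 (by norm_num) (by norm_num)
  have h3 : (3 : Fin n) ≠ 0 := by exact_mod_cast hk 3 (by norm_num) (by norm_num)
  have h4 : (4 : Fin n) ≠ 0 := by exact_mod_cast hk 4 (by norm_num) (by norm_num)
  have hflip := h.sum_window_caStep_update_sub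
    (fun j => decide (j + 1 = 0) || (a && decide (j + 2 = 0))) 0 true
  rw [Fin.sum_window (by omega)] at hflip
  norm_num [caStep, h1, h2, h3, h4, update_apply] at hflip
  linarith

end

theorem stmt2 (n : ℕ) (hn : 5 ≤ n) [NeZero n] (f : Bool → Bool → Bool → Bool)
    (h : numberConserving n (fun _ => f)) :
    (f false true false = f true true false ∧ f false true true = f true true true) ∨
    (f false true false = f false true true ∧ f true true false = f true true true) := by
  have h0 := h.toNat_add_toNat_eq hn false
  have h1 := h.toNat_add_toNat_eq hn true
  apply Bool.eq_and_eq_or_eq_and_eq_of_toNat_add_eq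
  omega
end

section
/- For n = 4 the rules with Wolfram numbers 160, 172, 202, 216, 228, 250 each occur in some number-conserving non-uniform cyclic rule vector of length 4, even though none of them satisfies the structural conditions required for participation in number-conserving CAs of length n ≥ 5. In particular, there exists a number-conserving 4-cell cyclic rule vector containing rule 160. -/
/-- Structural condition on the `b = 0` half of the rule table. -/
def cond2 (f : Bool → Bool → Bool → Bool) : Prop :=
  (f false false false = f true false false ∧ f false false true = f true false true) ∨
  (f false false false = f false false true ∧ f true false false = f true false true)

/-- Structural condition on the `b = 1` half of the rule table. -/
def cond3 (f : Bool → Bool → Bool → Bool) : Prop :=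
  (f false true false = f true true false ∧ f false true true = f true true true) ∨
  (f false true false = f false true true ∧ f true true false = f true true true)

/-- A rule satisfying all structural conditions of a number conserving rule. -/
def NCrule (f : Bool → Bool → Bool → Bool) : Prop :=
  f false false false = false ∧ f true true true = true ∧ cond2 f ∧ cond3 f

set_option maxHeartbeats 4000000 in
theorem stmt19 :
    ∀ R ∈ ({160, 172, 202, 216, 228, 250} : Finset ℕ),
      (∃ g : Fin 4 → Bool → Bool → Bool → Bool,
        numberConserving 4 g ∧ ∃ j : Fin 4, g j = wolfram R) ∧
      ¬ NCrule (wolfram R) := by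
  intro R hR
  fin_cases hR
  · exact ⟨⟨![wolfram 160, wolfram 160, wolfram 250, wolfram 250], by unfold numberConserving onesCount caStep; decide, 0, rfl⟩, by unfold NCrule cond2 cond3; decide⟩
  · exact ⟨⟨![wolfram 172, wolfram 160, wolfram 250, wolfram 216], by unfold numberConserving onesCount caStep; decide, 0, rfl⟩, by unfold NCrule cond2 cond3; decide⟩
  · exact ⟨⟨![wolfram 202, wolfram 136, wolfram 172, wolfram 238], by unfold numberConserving onesCount caStep; decide, 0, rfl⟩, by unfold NCrule cond2 cond3; decide⟩
  · exact ⟨⟨![wolfram 216, wolfram 172, wolfram 160, wolfram 250], by unfold numberConserving onesCount caStep; decide, 0, rfl⟩, by unfold NCrule cond2 cond3; decide⟩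
  · exact ⟨⟨![wolfram 228, wolfram 192, wolfram 216, wolfram 252], by unfold numberConserving onesCount caStep; decide, 0, rfl⟩, by unfold NCrule cond2 cond3; decide⟩
  · exact ⟨⟨![wolfram 250, wolfram 136, wolfram 172, wolfram 170], by unfold numberConserving onesCount caStep; decide, 0, rfl⟩, by unfold NCrule cond2 cond3; decide⟩
end
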